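/- If a simplicial complex Γ on [n] is d-collapsible for some positive integer d, then Γ is t-chordal for all t ≥ d. -/

import Mathlib

namespace ChordalPaper

/-- A simplicial complex on vertex set `Fin n`: a family of finsets closed under subsets. -/
def IsComplex {n : ℕ} (Γ : Set (Finset (Fin n))) : Prop :=
  ∀ F ∈ Γ, ∀ F' ⊆ F, F' ∈ Γ

/-- The `d`-closure `Δ_d(Γ)`: all subsets of size `≤ d`, together with all subsets
all of whose `(d+1)`-element subsets are faces of `Γ`. -/
def dClosure {n : ℕ} (d : ℕ) (Γ : Set (Finset (Fin n))) : Set (Finset (Fin n)) :=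
  {F | F.card ≤ d ∨ ∀ G ⊆ F, G.card = d + 1 → G ∈ Γ}

/-- The pure `(d-1)`-skeleton `⟨[n]⟩^{[d-1]}` of the full simplex: all subsets of size `≤ d`. -/
def fullSkel (n d : ℕ) : Set (Finset (Fin n)) := {F | F.card ≤ d}

/-- A facet: a maximal face. -/
def IsFacet {n : ℕ} (Γ : Set (Finset (Fin n))) (F : Finset (Fin n)) : Prop :=
  F ∈ Γ ∧ ∀ G ∈ Γ, F ⊆ G → G = F

/-- A free face: a face contained in a unique facet. -/
def IsFreeFace {n : ℕ} (Γ : Set (Finset (Fin n))) (E : Finset (Fin n)) : Prop :=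
  E ∈ Γ ∧ ∃! F, IsFacet Γ F ∧ E ⊆ F

/-- Collapse at `E`: remove all faces containing `E` (including `E` itself). -/
def collapseFace {n : ℕ} (Γ : Set (Finset (Fin n))) (E : Finset (Fin n)) :
    Set (Finset (Fin n)) := {F ∈ Γ | ¬ E ⊆ F}

/-- Successive collapses along a list of faces. -/
def collapseList {n : ℕ} (Γ : Set (Finset (Fin n))) :
    List (Finset (Fin n)) → Set (Finset (Fin n))
  | [] => Γ
  | E :: L => collapseList (collapseFace Γ E) L

/-- A free sequence: each face is free in the complex obtained by collapsing the previous ones. -/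
def IsFreeSeq {n : ℕ} (Γ : Set (Finset (Fin n))) : List (Finset (Fin n)) → Prop
  | [] => True
  | E :: L => IsFreeFace Γ E ∧ IsFreeSeq (collapseFace Γ E) L

/-- `d`-collapsibility: a sequence of elementary `d`-collapsings (at free faces of
dimension `< d`, i.e. cardinality `≤ d`) reduces `Γ` to the void complex. -/
def Collapsible {n : ℕ} (d : ℕ) (Γ : Set (Finset (Fin n))) : Prop :=
  ∃ L : List (Finset (Fin n)),
    IsFreeSeq Γ L ∧ (∀ E ∈ L, E.card ≤ d) ∧ collapseList Γ L = ∅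

/-- Simplicial deletion `Γ∖E`: remove all faces strictly containing `E` (keeping `E`). -/
def srDel {n : ℕ} (Γ : Set (Finset (Fin n))) (E : Finset (Fin n)) :
    Set (Finset (Fin n)) := {F ∈ Γ | ¬ E ⊂ F}

/-- Successive simplicial deletions along a list of faces. -/
def srDelList {n : ℕ} (Γ : Set (Finset (Fin n))) :
    List (Finset (Fin n)) → Set (Finset (Fin n))
  | [] => Γ
  | E :: L => srDelList (srDel Γ E) L

/-- A simplicial order for a `d`-closure on `Fin n`: a sequence of non-facet free faces of
cardinality `d` whose successive simplicial deletions reduce the complex to the pure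
`(d-1)`-skeleton of the full simplex. -/
def IsSimpOrder {n : ℕ} (d : ℕ) (Γ : Set (Finset (Fin n))) :
    List (Finset (Fin n)) → Prop
  | [] => Γ = fullSkel n d
  | E :: L => E.card = d ∧ IsFreeFace Γ E ∧ ¬ IsFacet Γ E ∧ IsSimpOrder d (srDel Γ E) L

/-- `Γ` is `d`-chordal: its `d`-closure equals the pure `(d-1)`-skeleton of the full
simplex or admits a simplicial order. -/
def DChordal {n : ℕ} (d : ℕ) (Γ : Set (Finset (Fin n))) : Prop :=
  ∃ L, IsSimpOrder d (dClosure d Γ) L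

/-- A minimal nonface of `Γ`. -/
def IsMinNonface {n : ℕ} (Γ : Set (Finset (Fin n))) (F : Finset (Fin n)) : Prop :=
  F ∉ Γ ∧ ∀ G ⊂ F, G ∈ Γ

end ChordalPaper

/-!
Collapsing a free face `E` with `|E| ≤ t` removes from the `t`-closure exactly the faces of size
`> t` containing `E`, and all of these lie in the interval `[E, F]` below the unique facet `F`
over `E`. Such an interval is emptied above level `t` by simplicial deletions: at `|E| = t` the
face `E` is itself free and not a facet, and for `|E| < t` one picks `v ∈ F \ E` and clears
first `[E ∪ {v}, F]`, then `[E, F \ {v}]`. Following a collapsing sequence step by step thus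
yields a simplicial order for `Δ_t(Γ)` that ends at the `t`-closure of the void complex, which is
the full `(t-1)`-skeleton.
-/

namespace ChordalPaper

variable {n : ℕ}

def HasSimpOrder (t : ℕ) (Δ : Set (Finset (Fin n))) : Prop :=
  ∃ L, IsSimpOrder t Δ L

def pruneAbove (t : ℕ) (Δ : Set (Finset (Fin n))) (E : Finset (Fin n)) :
    Set (Finset (Fin n)) :=
  {S ∈ Δ | ¬(E ⊆ S ∧ t < S.card)}

variable {t : ℕ}

theorem exists_isFacet_superset {Γ : Set (Finset (Fin n))} {G : Finset (Fin n)} (hG : G ∈ Γ) :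
    ∃ F, IsFacet Γ F ∧ G ⊆ F := by
  obtain ⟨F, hGF, hF⟩ := (Set.toFinite Γ).exists_le_maximal hG
  exact ⟨F, ⟨hF.prop, fun S hS hFS => le_antisymm (hF.le_of_ge hS hFS) hFS⟩, hGF⟩

theorem isFreeFace_iff {Γ : Set (Finset (Fin n))} {E : Finset (Fin n)} :
    IsFreeFace Γ E ↔ E ∈ Γ ∧ ∃ F ∈ Γ, ∀ S ∈ Γ, E ⊆ S → S ⊆ F := by
  constructor
  · rintro ⟨hE, F, ⟨hF, -⟩, huniq⟩
    refine ⟨hE, F, hF.1, fun S hS hES => ?_⟩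
    obtain ⟨G, hG, hSG⟩ := exists_isFacet_superset hS
    exact huniq G ⟨hG, hES.trans hSG⟩ ▸ hSG
  · rintro ⟨hE, F, hF, hmax⟩
    have hEF : E ⊆ F := hmax E hE subset_rfl
    have hFacet : IsFacet Γ F :=
      ⟨hF, fun S hS hFS => subset_antisymm (hmax S hS (hEF.trans hFS)) hFS⟩
    exact ⟨hE, F, ⟨hFacet, hEF⟩, fun G ⟨hG, hEG⟩ => (hG.2 F hF (hmax G hG.1 hEG)).symm⟩

theorem pruneAbove_eq_self {Δ : Set (Finset (Fin n))} {E : Finset (Fin n)}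
    (h : ∀ S ∈ Δ, E ⊆ S → S.card ≤ t) : pruneAbove t Δ E = Δ :=
  Set.sep_eq_self_iff_mem_true.2 fun S hS ⟨hES, hSt⟩ => (h S hS hES).not_gt hSt

theorem pruneAbove_pruneAbove_of_subset {Δ : Set (Finset (Fin n))} {E E' : Finset (Fin n)}
    (hEE' : E ⊆ E') : pruneAbove t (pruneAbove t Δ E') E = pruneAbove t Δ E := by
  ext S
  simp only [pruneAbove, Set.mem_sep_iff]
  exact ⟨fun h => ⟨h.1.1, h.2⟩, fun h => ⟨⟨h.1, fun hS => h.2 ⟨hEE'.trans hS.1, hS.2⟩⟩, h.2⟩⟩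

theorem srDel_eq_pruneAbove {Δ : Set (Finset (Fin n))} {E : Finset (Fin n)}
    (hE : E.card = t) : srDel Δ E = pruneAbove t Δ E := by
  ext S
  simp only [srDel, pruneAbove, Set.mem_sep_iff, and_congr_right_iff]
  refine fun _ => not_congr ⟨fun h => ⟨h.subset, hE ▸ Finset.card_lt_card h⟩, fun h => ?_⟩
  exact Finset.ssubset_iff_subset_ne.2 ⟨h.1, by rintro rfl; omega⟩

theorem hasSimpOrder_of_pruneAbove {Δ : Set (Finset (Fin n))} {E F : Finset (Fin n)}
    (hEF : E ⊆ F) (hEt : E.card ≤ t) (hF : ∀ S ⊆ F, S ∈ Δ)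
    (hstar : ∀ S ∈ Δ, E ⊆ S → t < S.card → S ⊆ F)
    (h : HasSimpOrder t (pruneAbove t Δ E)) : HasSimpOrder t Δ := by
  by_cases hFt : F.card ≤ t
  · rwa [pruneAbove_eq_self fun S hS hES => ?_] at h
    by_contra! hSt
    exact hFt.not_gt (hSt.trans_le (Finset.card_le_card (hstar S hS hES hSt)))
  rcases hEt.eq_or_lt with hEt | hEt
  · obtain ⟨L, hL⟩ := h
    have hEF' : E ⊂ F := Finset.ssubset_iff_subset_ne.2 ⟨hEF, by rintro rfl; omega⟩
    have hfree : IsFreeFace Δ E := by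
      refine isFreeFace_iff.2 ⟨hF E hEF, F, hF F subset_rfl, fun S hS hES => ?_⟩
      by_cases hSt : t < S.card
      · exact hstar S hS hES hSt
      · rwa [← Finset.eq_of_subset_of_card_le hES (by omega)]
    have hnotFacet : ¬IsFacet Δ E := fun hE => hEF'.ne (hE.2 F (hF F subset_rfl) hEF).symm
    exact ⟨E :: L, hEt, hfree, hnotFacet, srDel_eq_pruneAbove hEt ▸ hL⟩
  · obtain ⟨v, hvF, hvE⟩ :=
      Finset.exists_of_ssubset (Finset.ssubset_iff_subset_ne.2 ⟨hEF, by rintro rfl; omega⟩)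
    have hvEcard := Finset.card_insert_of_notMem hvE
    refine hasSimpOrder_of_pruneAbove (E := insert v E) (F := F) (Finset.insert_subset hvF hEF)
      (by omega) hF (fun S hS hvES => hstar S hS ((Finset.subset_insert v E).trans hvES)) ?_
    refine hasSimpOrder_of_pruneAbove (E := E) (F := F.erase v)
      (Finset.subset_erase.2 ⟨hEF, hvE⟩) hEt.le (fun S hS => ⟨hF S (hS.trans (F.erase_subset v)),
        fun hvS => F.notMem_erase v (hS (hvS.1 (E.mem_insert_self v)))⟩) ?_ ?_
    · rintro S ⟨hS, hvS⟩ hES hSt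
      exact Finset.subset_erase.2
        ⟨hstar S hS hES hSt, fun hv => hvS ⟨Finset.insert_subset hv hES, hSt⟩⟩
    · rwa [pruneAbove_pruneAbove_of_subset (E.subset_insert v)]
termination_by F.card - E.card
decreasing_by
  all_goals
    have := Finset.card_erase_of_mem hvF
    omega

theorem isComplex_collapseFace {Γ : Set (Finset (Fin n))} (hΓ : IsComplex Γ)
    (E : Finset (Fin n)) : IsComplex (collapseFace Γ E) :=
  fun F ⟨hF, hEF⟩ F' hF' => ⟨hΓ F hF F' hF', fun h => hEF (h.trans hF')⟩

theorem mem_dClosure_of_mem {Γ : Set (Finset (Fin n))} (hΓ : IsComplex Γ) {F : Finset (Fin n)}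
    (hF : F ∈ Γ) : F ∈ dClosure t Γ :=
  Or.inr fun G hG _ => hΓ F hF G hG

theorem dClosure_empty : dClosure t (∅ : Set (Finset (Fin n))) = fullSkel n t := by
  ext S
  refine ⟨fun hS => ?_, Or.inl⟩
  rcases hS with hS | hS
  · exact hS
  · show S.card ≤ t
    by_contra! hSt
    obtain ⟨G, hGS, hG⟩ := Finset.exists_subset_card_eq (s := S) (n := t + 1) hSt
    exact hS G hGS hG

theorem dClosure_collapseFace {Γ : Set (Finset (Fin n))} {E : Finset (Fin n)}
    (hE : E.card ≤ t) : dClosure t (collapseFace Γ E) = pruneAbove t (dClosure t Γ) E := by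
  ext S
  by_cases hSt : S.card ≤ t
  · exact ⟨fun _ => ⟨Or.inl hSt, fun h => by omega⟩, fun _ => Or.inl hSt⟩
  have hSt' : t < S.card := by omega
  simp only [dClosure, collapseFace, pruneAbove, Set.mem_ofPred_eq, hSt, hSt',
    false_or, and_true]
  constructor
  · intro h
    refine ⟨fun G hGS hG => (h G hGS hG).1, fun hES => ?_⟩
    obtain ⟨G, hEG, hGS, hG⟩ := Finset.exists_subsuperset_card_eq hES (by omega) hSt'
    exact (h G hGS hG).2 hEG
  · exact fun ⟨h, hES⟩ G hGS hG => ⟨h G hGS hG, fun hEG => hES (hEG.trans hGS)⟩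

theorem subset_of_mem_dClosure {Γ : Set (Finset (Fin n))} {E F S : Finset (Fin n)}
    (hE : E.card ≤ t) (hF : ∀ G ∈ Γ, E ⊆ G → G ⊆ F) (hS : S ∈ dClosure t Γ) (hES : E ⊆ S)
    (hSt : t < S.card) : S ⊆ F := by
  have hS : ∀ G ⊆ S, G.card = t + 1 → G ∈ Γ := hS.resolve_left (by omega)
  intro x hx
  obtain ⟨G, hxEG, hGS, hG⟩ := Finset.exists_subsuperset_card_eq (Finset.insert_subset hx hES)
    ((E.card_insert_le x).trans (by omega)) hSt
  exact hF G (hS G hGS hG) ((E.subset_insert x).trans hxEG) (hxEG (E.mem_insert_self x))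

theorem hasSimpOrder_dClosure_of_isFreeSeq {Γ : Set (Finset (Fin n))}
    {L : List (Finset (Fin n))} (hΓ : IsComplex Γ) (hL : IsFreeSeq Γ L)
    (hLt : ∀ E ∈ L, E.card ≤ t) (hvoid : collapseList Γ L = ∅) :
    HasSimpOrder t (dClosure t Γ) := by
  induction L generalizing Γ with
  | nil =>
    obtain rfl : Γ = ∅ := hvoid
    exact ⟨[], dClosure_empty⟩
  | cons E L ih =>
    obtain ⟨hfree, hL⟩ := hL
    have hEt : E.card ≤ t := hLt E List.mem_cons_self
    obtain ⟨hE, F, hF, hstar⟩ := isFreeFace_iff.1 hfree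
    have hrest := ih (isComplex_collapseFace hΓ E) hL (fun G hG => hLt G (.tail E hG)) hvoid
    rw [dClosure_collapseFace hEt] at hrest
    exact hasSimpOrder_of_pruneAbove (hstar E hE subset_rfl) hEt
      (fun S hS => mem_dClosure_of_mem hΓ (hΓ F hF S hS))
      (fun S hS => subset_of_mem_dClosure hEt hstar hS) hrest

end ChordalPaper

open ChordalPaper in
theorem stmt9_general (n d : ℕ) (Γ : Set (Finset (Fin n))) (hΓ : IsComplex Γ)
    (hcol : Collapsible d Γ) :
    ∀ t, d ≤ t → DChordal t Γ := by
  obtain ⟨L, hL, hLd, hvoid⟩ := hcol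
  exact fun t hdt =>
    hasSimpOrder_dClosure_of_isFreeSeq hΓ hL (fun E hE => (hLd E hE).trans hdt) hvoid

open ChordalPaper in
/-- a `d`-collapsible complex is `t`-chordal for all `t ≥ d`. -/
theorem stmt9 (n d : ℕ) (hd : 1 ≤ d) (Γ : Set (Finset (Fin n))) (hΓ : IsComplex Γ)
    (hcol : Collapsible d Γ) :
    ∀ t, d ≤ t → DChordal t Γ :=
  stmt9_general n d Γ hΓ hcol
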